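/- arXiv:math/0411523 — 3 statements merged into one kernel-verified Lean document; each statement's English description precedes it below -/
import Mathlib

section
/- In A_g(V), if u ∈ V^{r*} with r ≠ 0 (eigenvalue e^{2πir/T} of gσ), then u ∈ O_g(V); hence A_g(V) is a quotient of V^{0*}/(O_g(V) ∩ V^{0*}). -/
open Complex DirectSum
open scoped Classical

noncomputable section

/-- Generalized binomial coefficient `x choose i` for `x : ℚ`. -/
def qchoose (x : ℚ) (i : ℕ) : ℚ := (∏ j ∈ Finset.range i, (x - j)) / (Nat.factorial i)

/-- The super-sign `(-1)^{p(u)p(v)}` read off from the weights `p, q` of homogeneous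
vectors: it is `-1` exactly when both weights are non-integral (both vectors odd). -/
def epsQ (p q : ℚ) : ℂ :=
  if (¬ ∃ a : ℤ, (a : ℚ) = p) ∧ (¬ ∃ b : ℤ, (b : ℚ) = q) then -1 else 1

/-- A vertex operator superalgebra, presented by its modes `Y u n` (for `n : ℤ`),
vacuum, conformal vector, and `½ℤ`-grading by weight spaces, together with the usual
axioms (truncation, vacuum/creation, `L(0)`-grading, `L(-1)`-translation and the
Borcherds/Jacobi identity with super-signs). -/
structure VOSA (V : Type) [AddCommGroup V] [Module ℂ V] where
  Y : V → ℤ → Module.End ℂ V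
  vac : V
  ω : V
  wtSpace : ℚ → Submodule ℂ V
  halfInt : ∀ n : ℚ, wtSpace n ≠ ⊥ → ∃ m : ℤ, n = (m : ℚ) / 2
  lowerBound : ∃ N : ℚ, ∀ n < N, wtSpace n = ⊥
  grading : DirectSum.IsInternal wtSpace
  fin_dim : ∀ n : ℚ, FiniteDimensional ℂ (wtSpace n)
  trunc : ∀ u v : V, ∃ N : ℤ, ∀ n ≥ N, Y u n v = 0
  vacuum_op : ∀ n : ℤ, Y vac n = if n = -1 then LinearMap.id else 0
  creation : ∀ v : V, Y v (-1) vac = v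
  creation' : ∀ (v : V) (n : ℤ), 0 ≤ n → Y v n vac = 0
  omega_wt : ω ∈ wtSpace 2
  vac_wt : vac ∈ wtSpace 0
  L0_grading : ∀ (p : ℚ) (v : V), v ∈ wtSpace p → Y ω 1 v = (p : ℂ) • v
  translation : ∀ (u : V) (n : ℤ), Y (Y ω 0 u) n = (-(n : ℂ)) • Y u (n - 1)
  mode_wt : ∀ (p q : ℚ) (u v : V) (n : ℤ), u ∈ wtSpace p → v ∈ wtSpace q →
    Y u n v ∈ wtSpace (p + q - n - 1)
  borcherds : ∀ (p q : ℚ) (u v w : V), u ∈ wtSpace p → v ∈ wtSpace q →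
    ∀ m n k : ℤ,
      ∑ᶠ i : ℕ, ((qchoose (m : ℚ) i : ℚ) : ℂ) • Y (Y u (k + (i : ℤ)) v) (m + n - (i : ℤ)) w =
      ∑ᶠ i : ℕ, ((-1 : ℂ) ^ i * ((qchoose (k : ℚ) i : ℚ) : ℂ)) •
        (Y u (m + k - (i : ℤ)) (Y v (n + (i : ℤ)) w)
          - ((-1 : ℂ) ^ k * epsQ p q) • Y v (k + n - (i : ℤ)) (Y u (m + (i : ℤ)) w))

variable {V : Type} [AddCommGroup V] [Module ℂ V]

namespace VOSA

/-- The even part `V_{\bar 0} = ⊕_{n ∈ ℤ} V_n`. -/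
def evenPart (A : VOSA V) : Submodule ℂ V := ⨆ n : ℤ, A.wtSpace (n : ℚ)

/-- The odd part `V_{\bar 1} = ⊕_{n ∈ ½+ℤ} V_n`. -/
def oddPart (A : VOSA V) : Submodule ℂ V := ⨆ n : ℤ, A.wtSpace ((n : ℚ) + 1/2)

/-- `L(0) = ω_1`. -/
def L0 (A : VOSA V) : Module.End ℂ V := A.Y A.ω 1

/-- `L(-1) = ω_0`. -/
def Lm1 (A : VOSA V) : Module.End ℂ V := A.Y A.ω 0

/-- An automorphism of a vertex operator superalgebra: a linear automorphism
preserving `ω` and compatible with all vertex operator modes. -/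
structure Aut (A : VOSA V) where
  g : V ≃ₗ[ℂ] V
  fix_omega : g A.ω = A.ω
  equivariant : ∀ (u : V) (n : ℤ) (v : V), g (A.Y u n v) = A.Y (g u) n (g v)

/-- The canonical parity involution property: identity on the even part,
minus identity on the odd part. -/
def IsParityAut (A : VOSA V) (s : Aut A) : Prop :=
  (∀ v ∈ A.evenPart, s.g v = v) ∧ (∀ v ∈ A.oddPart, s.g v = -v)

end VOSA

/-- The `e^{2πir/T}`-eigenspace of a linear automorphism. -/
def eigSp (f : V ≃ₗ[ℂ] V) (T r : ℕ) : Submodule ℂ V :=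
  Module.End.eigenspace (f.toLinearMap) (Complex.exp (2 * Real.pi * Complex.I * r / T))

def deltaR (r : ℕ) : ℚ := if r = 0 then 1 else 0

/-- `u ∘_g v = Res_z (1+z)^{wt u - 1 + δ_r + r/T} z^{-1-δ_r} Y(u,z)v`, in mode form,
for `u` homogeneous of weight `p` lying in the `gσ`-eigenspace with index `r`. -/
def circGElem (A : VOSA V) (T r : ℕ) (p : ℚ) (u v : V) : V :=
  ∑ᶠ i : ℕ, ((qchoose (p - 1 + deltaR r + (r : ℚ) / T) i : ℚ) : ℂ) •
    A.Y u ((i : ℤ) - 1 - (if r = 0 then 1 else 0)) v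

/-- `O_g(V)`: the span of all `u ∘_g v`. -/
def Og (A : VOSA V) (gs : V ≃ₗ[ℂ] V) (T : ℕ) : Submodule ℂ V :=
  Submodule.span ℂ {x | ∃ (r : ℕ) (p : ℚ) (u v : V), r < T ∧
    u ∈ eigSp gs T r ∧ u ∈ A.wtSpace p ∧ x = circGElem A T r p u v}

/-- `u * v = Res_z (1+z)^{wt u} z^{-1} Y(u,z)v` for `u` homogeneous of weight `p`. -/
def starElem (A : VOSA V) (p : ℚ) (u v : V) : V :=
  ∑ᶠ i : ℕ, ((qchoose p i : ℚ) : ℂ) • A.Y u ((i : ℤ) - 1) v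

/-- `u ∘ v = Res_z (1+z)^{wt u} z^{-2} Y(u,z)v` for `u` homogeneous of weight `p`. -/
def circElem (A : VOSA V) (p : ℚ) (u v : V) : V :=
  ∑ᶠ i : ℕ, ((qchoose p i : ℚ) : ℂ) • A.Y u ((i : ℤ) - 2) v

/-- `O(S)` for a subalgebra `S` (e.g. `V^{0*}`): span of `a ∘ b`, `a, b ∈ S`. -/
def Osub (A : VOSA V) (S : Submodule ℂ V) : Submodule ℂ V :=
  Submodule.span ℂ {x | ∃ (p : ℚ) (u v : V), u ∈ S ∧ u ∈ A.wtSpace p ∧ v ∈ S ∧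
    x = circElem A p u v}

/-- The projection of `V` onto the weight-`p` subspace coming from the internal
direct sum decomposition `V = ⊕ V_n`. -/
def projWt (A : VOSA V) (p : ℚ) : V →ₗ[ℂ] V :=
  (A.wtSpace p).subtype ∘ₗ (DirectSum.component ℂ ℚ (fun q => ↥(A.wtSpace q)) p) ∘ₗ
    (LinearEquiv.ofBijective (DirectSum.coeLinearMap A.wtSpace) A.grading).symm.toLinearMap

/-- A weak `g`-twisted module over a vertex operator superalgebra `A`, where `g`
has order `T₀`: modes `YM u n` for `n : ℚ`, supported on `r/T₀ + ℤ` for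
`u ∈ V^r`, with truncation, vacuum and the twisted Borcherds/Jacobi identity. -/
structure TwMod (A : VOSA V) (g : VOSA.Aut A) (T₀ : ℕ) (M : Type)
    [AddCommGroup M] [Module ℂ M] where
  YM : V → ℚ → M →ₗ[ℂ] M
  supp : ∀ (r : ℕ), r < T₀ → ∀ u ∈ eigSp g.g T₀ r, ∀ n : ℚ,
    (¬ ∃ m : ℤ, n = (m : ℚ) + (r : ℚ) / T₀) → YM u n = 0
  trunc : ∀ (u : V) (w : M), ∃ N : ℚ, ∀ n ≥ N, YM u n w = 0
  vac_act : ∀ n : ℚ, YM A.vac n = if n = -1 then LinearMap.id else 0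
  tw_borcherds : ∀ (r : ℕ) (p q : ℚ) (u v : V) (w : M),
    u ∈ eigSp g.g T₀ r → u ∈ A.wtSpace p → v ∈ A.wtSpace q →
    ∀ (m n : ℚ) (k : ℤ), (∃ a : ℤ, m = (a : ℚ) + (r : ℚ) / T₀) →
      ∑ᶠ i : ℕ, ((qchoose m i : ℚ) : ℂ) • YM (A.Y u (k + (i : ℤ)) v) (m + n - (i : ℚ)) w =
      ∑ᶠ i : ℕ, ((-1 : ℂ) ^ i * ((qchoose (k : ℚ) i : ℚ) : ℂ)) •
        (YM u (m + (k : ℚ) - (i : ℚ)) (YM v (n + (i : ℚ)) w)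
          - ((-1 : ℂ) ^ k * epsQ p q) • YM v ((k : ℚ) + n - (i : ℚ)) (YM u (m + (i : ℚ)) w))

/-- The space of lowest weight vectors
`Ω(M) = {w : u_{wt u + n} w = 0 for all homogeneous u and n ≥ 0}`. -/
def OmegaSet (A : VOSA V) {g : VOSA.Aut A} {T₀ : ℕ} {M : Type}
    [AddCommGroup M] [Module ℂ M] (W : TwMod A g T₀ M) : Set M :=
  {w | ∀ (p : ℚ) (u : V), u ∈ A.wtSpace p → ∀ m : ℚ, p ≤ m → W.YM u m w = 0}

/-- The zero-mode `o(a) = a_{wt a - 1}`, extended linearly to all of `V`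
via the projections to homogeneous components. -/
def oMode (A : VOSA V) {g : VOSA.Aut A} {T₀ : ℕ} {M : Type}
    [AddCommGroup M] [Module ℂ M] (W : TwMod A g T₀ M) (a : V) (w : M) : M :=
  ∑ᶠ p : ℚ, W.YM (projWt A p a) (p - 1) w

/-- An admissible `g`-twisted module: a weak `g`-twisted module with a
`(1/T)ℤ₊`-grading compatible with the mode actions. -/
structure AdmTwMod (A : VOSA V) (g : VOSA.Aut A) (T₀ T : ℕ) (M : Type)
    [AddCommGroup M] [Module ℂ M] extends TwMod A g T₀ M where
  gr : ℚ → Submodule ℂ M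
  gr_internal : DirectSum.IsInternal gr
  gr_supp : ∀ n : ℚ, gr n ≠ ⊥ → ∃ a : ℕ, n = (a : ℚ) / T
  gr_compat : ∀ (p : ℚ) (v : V), v ∈ A.wtSpace p → ∀ (m n : ℚ) (w : M),
    w ∈ gr n → YM v m w ∈ gr (n + p - m - 1)

/-- A submodule invariant under all twisted modes. -/
def TwMod.Invariant {A : VOSA V} {g : VOSA.Aut A} {T₀ : ℕ} {M : Type}
    [AddCommGroup M] [Module ℂ M] (W : TwMod A g T₀ M) (N : Submodule ℂ M) : Prop :=
  ∀ (u : V) (m : ℚ), ∀ w ∈ N, W.YM u m w ∈ N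

/-- A graded submodule: one which is the sum of its graded pieces. -/
def AdmTwMod.IsGraded {A : VOSA V} {g : VOSA.Aut A} {T₀ T : ℕ} {M : Type}
    [AddCommGroup M] [Module ℂ M] (W : AdmTwMod A g T₀ T M) (N : Submodule ℂ M) : Prop :=
  N = ⨆ n : ℚ, N ⊓ W.gr n

/-- A simple admissible twisted module: nonzero, and `0`, `M` are the only
graded invariant submodules. -/
def AdmTwMod.IsSimple {A : VOSA V} {g : VOSA.Aut A} {T₀ T : ℕ} {M : Type}
    [AddCommGroup M] [Module ℂ M] (W : AdmTwMod A g T₀ T M) : Prop :=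
  (⊥ : Submodule ℂ M) ≠ ⊤ ∧
  ∀ N : Submodule ℂ M, W.toTwMod.Invariant N → W.IsGraded N → N = ⊥ ∨ N = ⊤

/-- An isomorphism of twisted modules. -/
structure TwIso {A : VOSA V} {g : VOSA.Aut A} {T₀ T : ℕ} {M N : Type}
    [AddCommGroup M] [Module ℂ M] [AddCommGroup N] [Module ℂ N]
    (W : AdmTwMod A g T₀ T M) (X : AdmTwMod A g T₀ T N) where
  e : M ≃ₗ[ℂ] N
  comm : ∀ (u : V) (n : ℚ) (w : M), e (W.YM u n w) = X.YM u n (e w)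

/-- A bundled admissible `g`-twisted module. -/
structure AdmBundle (A : VOSA V) (g : VOSA.Aut A) (T₀ T : ℕ) where
  M : Type
  [acg : AddCommGroup M]
  [mod : Module ℂ M]
  str : AdmTwMod A g T₀ T M

attribute [instance] AdmBundle.acg AdmBundle.mod

/-- The space `L(V,g) ⊂ ℂ[t^{1/T₀},t^{-1/T₀}] ⊗ V`, modelled as finitely supported
functions `ℚ →₀ V`: the component at `n + r/T₀` must lie in `V^r`. -/
def LVgSet (A : VOSA V) (g : VOSA.Aut A) (T₀ : ℕ) : Set (ℚ →₀ V) :=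
  {f | ∀ m : ℚ, f m ≠ 0 → ∃ (a : ℤ) (r : ℕ), r < T₀ ∧ m = (a : ℚ) + (r : ℚ) / T₀ ∧
    f m ∈ eigSp g.g T₀ r}

/-- The operator `D = d/dt ⊗ 1 + 1 ⊗ L(-1)` on `ℂ[t^{1/T₀},t^{-1/T₀}] ⊗ V`,
sending `t^q ⊗ a` to `q t^{q-1} ⊗ a + t^q ⊗ L(-1)a`. -/
def Dop (A : VOSA V) (f : ℚ →₀ V) : ℚ →₀ V :=
  f.sum fun q a => (q : ℂ) • Finsupp.single (q - 1) a + Finsupp.single q (A.Y A.ω 0 a)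

/-- The subspace `D L(V,g)` (its span). -/
def DLsub (A : VOSA V) (g : VOSA.Aut A) (T₀ : ℕ) : Submodule ℂ (ℚ →₀ V) :=
  Submodule.span ℂ (Dop A '' LVgSet A g T₀)

/-- The `0`-th product on `L(V)`: `(t^q ⊗ a)_0 (t^{q'} ⊗ b) = Σ_i C(q,i) t^{q+q'-i} ⊗ a_i b`,
whose descent to `V[g] = L(V,g)/DL(V,g)` is the Lie superbracket. -/
def mode0 (A : VOSA V) (f h : ℚ →₀ V) : ℚ →₀ V :=
  f.sum fun q a => h.sum fun q' b =>
    ∑ᶠ i : ℕ, ((qchoose q i : ℚ) : ℂ) • Finsupp.single (q + q' - (i : ℚ)) (A.Y a (i : ℤ) b)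

/-- The lift `o(a) = a(wt a - 1) = Σ_p t^{p-1} ⊗ (proj_p a)` of the map
`V^{0*} → V[g]_0`. -/
def oLift (A : VOSA V) (a : V) : ℚ →₀ V :=
  ∑ᶠ p : ℚ, Finsupp.single (p - 1) (projWt A p a)

/-- A module over the twisted Lie superalgebra `V[g]`: mode actions with the
correct support, truncation, vacuum normalization and the (super) commutator
formula, but without the full twisted Jacobi identity. -/
structure LieRep (A : VOSA V) (g : VOSA.Aut A) (T₀ : ℕ) (M : Type)
    [AddCommGroup M] [Module ℂ M] where
  act : V → ℚ → M →ₗ[ℂ] M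
  supp : ∀ (r : ℕ), r < T₀ → ∀ u ∈ eigSp g.g T₀ r, ∀ n : ℚ,
    (¬ ∃ m : ℤ, n = (m : ℚ) + (r : ℚ) / T₀) → act u n = 0
  trunc : ∀ (u : V) (w : M), ∃ N : ℚ, ∀ n ≥ N, act u n w = 0
  vac_act : ∀ n : ℚ, act A.vac n = if n = -1 then LinearMap.id else 0
  comm : ∀ (p q : ℚ) (u v : V), u ∈ A.wtSpace p → v ∈ A.wtSpace q →
    ∀ (m n : ℚ) (w : M),
      act u m (act v n w) - epsQ p q • act v n (act u m w) =
      ∑ᶠ i : ℕ, ((qchoose m i : ℚ) : ℂ) • act (A.Y u (i : ℤ) v) (m + n - (i : ℚ)) w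

/-- A submodule invariant under all `V[g]`-mode actions. -/
def LieRep.Invariant {A : VOSA V} {g : VOSA.Aut A} {T₀ : ℕ} {M : Type}
    [AddCommGroup M] [Module ℂ M] (W : LieRep A g T₀ M) (N : Submodule ℂ M) : Prop :=
  ∀ (u : V) (m : ℚ), ∀ w ∈ N, W.act u m w ∈ N

/-- Mode form of the twisted associativity relation
`(z₀+z₂)^K Y(a,z₀+z₂)Y(b,z₂)u = (z₂+z₀)^K Y(Y(a,z₀)b,z₂)u`. -/
def AssocRel (A : VOSA V) {g : VOSA.Aut A} {T₀ : ℕ} {M : Type}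
    [AddCommGroup M] [Module ℂ M] (W : LieRep A g T₀ M) (K : ℚ) (a b : V) (u : M) : Prop :=
  ∀ (d : ℤ) (ν : ℚ),
    ∑ᶠ i : ℕ, ((qchoose K i : ℚ) : ℂ) • W.act a (K + (d : ℚ) - (i : ℚ)) (W.act b ((i : ℚ) + ν) u) =
    ∑ᶠ i : ℕ, ((qchoose K i : ℚ) : ℂ) • W.act (A.Y a ((i : ℤ) + d) b) (K - (i : ℚ) + ν) u

/-!
For `r ≠ 0` the twisted product has no `z⁻²` term, so the creation property gives
`u ∘_g 1 = u_{-1} 1 = u` for every homogeneous `u ∈ V^r`. Since `gσ` has finite order `T` and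
preserves weights, the averaging projections `π_r = T⁻¹ ∑_j e^{-2πi rj/T} (gσ)^j` onto its
eigenspaces preserve the weight grading; hence every vector of `V^r`, `r ≠ 0`, is a sum of
homogeneous ones and lies in `O_g(V)`, and `v ≡ π_0 v` modulo `O_g(V)` because `∑_r π_r = 1`.
-/

namespace Module.End

variable {K M : Type*} [Field K] [AddCommGroup M] [Module K M]

/-- For `f ^ T = 1` and `ζ` a primitive `T`-th root of unity, the projection of `M` onto the
`ζ ^ k`-eigenspace of `f` along the other eigenspaces. -/
def eigenProj (f : End K M) (ζ : K) (T k : ℕ) : End K M :=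
  (T : K)⁻¹ • ∑ j ∈ Finset.range T, (ζ ^ k)⁻¹ ^ j • f ^ j

variable {f : End K M} {ζ : K} {T : ℕ}

theorem mul_eigenProj (hζ : ζ ^ T = 1) (hf : f ^ T = 1) (k : ℕ) :
    f * f.eigenProj ζ T k = ζ ^ k • f.eigenProj ζ T k := by
  rcases eq_or_ne T 0 with rfl | hT
  · simp [eigenProj]
  set c := (ζ ^ k)⁻¹
  have hζk : ζ ^ k * c = 1 :=
    mul_inv_cancel₀ (pow_ne_zero k (ne_zero_pow hT (hζ ▸ one_ne_zero)))
  have hcT : c ^ T = 1 := by rw [inv_pow, ← pow_mul, mul_comm, pow_mul, hζ, one_pow, inv_one]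
  set F : ℕ → End K M := fun j => c ^ j • f ^ j
  have hshift : ∑ j ∈ Finset.range T, F (j + 1) = ∑ j ∈ Finset.range T, F j := by
    have h := Finset.sum_range_succ' F T
    rw [Finset.sum_range_succ, show F T = F 0 by simp [F, hcT, hf]] at h
    exact (add_right_cancel h).symm
  have hcf : c • (f * ∑ j ∈ Finset.range T, F j) = ∑ j ∈ Finset.range T, F j := by
    refine Eq.trans ?_ hshift
    rw [Finset.mul_sum, Finset.smul_sum]
    refine Finset.sum_congr rfl fun j _ => ?_
    simp only [F, mul_smul_comm, smul_smul, pow_succ']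
  have hS : f * ∑ j ∈ Finset.range T, F j = ζ ^ k • ∑ j ∈ Finset.range T, F j := by
    conv_rhs => rw [← hcf, smul_smul, hζk, one_smul]
  rw [eigenProj, mul_smul_comm, hS, smul_comm]

theorem eigenProj_apply_mem_eigenspace (hζ : ζ ^ T = 1) (hf : f ^ T = 1) (k : ℕ) (x : M) :
    f.eigenProj ζ T k x ∈ f.eigenspace (ζ ^ k) :=
  mem_eigenspace_iff.2 (LinearMap.congr_fun (mul_eigenProj hζ hf k) x)

theorem eigenProj_apply_of_mem_eigenspace (hζ : ζ ^ T = 1) (hT : (T : K) ≠ 0) {k : ℕ} {x : M}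
    (hx : x ∈ f.eigenspace (ζ ^ k)) : f.eigenProj ζ T k x = x := by
  have hζk : ζ ^ k ≠ 0 :=
    pow_ne_zero k (ne_zero_pow (by rintro rfl; simp at hT) (hζ ▸ one_ne_zero))
  have hpow : ∀ j, (f ^ j) x = (ζ ^ k) ^ j • x := by
    intro j
    induction j with
    | zero => simp
    | succ j ih =>
      rw [pow_succ' f, mul_apply, ih, map_smul, mem_eigenspace_iff.1 hx, smul_smul, ← pow_succ]
  have hterm : ∀ j, ((ζ ^ k)⁻¹ ^ j • f ^ j) x = x := fun j => by
    rw [LinearMap.smul_apply, hpow, smul_smul, ← mul_pow, inv_mul_cancel₀ hζk, one_pow,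
      one_smul]
  rw [eigenProj, LinearMap.smul_apply, LinearMap.sum_apply, Finset.sum_congr rfl fun j _ => hterm j,
    Finset.sum_const, Finset.card_range]
  rw [← Nat.cast_smul_eq_nsmul K, smul_smul, inv_mul_cancel₀ hT, one_smul]

theorem sum_eigenProj (hζ : IsPrimitiveRoot ζ T) (hT : (T : K) ≠ 0) :
    ∑ k ∈ Finset.range T, f.eigenProj ζ T k = 1 := by
  have hchar : ∀ j ∈ Finset.range T,
      ∑ k ∈ Finset.range T, (ζ ^ k)⁻¹ ^ j = if j = 0 then (T : K) else 0 := by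
    intro j hj
    have hswap : ∀ k, (ζ ^ k)⁻¹ ^ j = (ζ ^ j)⁻¹ ^ k := fun k => by
      rw [inv_pow, inv_pow, ← pow_mul, ← pow_mul, mul_comm]
    rw [Finset.sum_congr rfl fun k _ => hswap k]
    split_ifs with h0
    · simp [h0]
    have hne : (ζ ^ j)⁻¹ ≠ 1 :=
      inv_ne_one.2 (hζ.pow_ne_one_of_pos_of_lt h0 (Finset.mem_range.1 hj))
    rw [geom_sum_eq hne, inv_pow, ← pow_mul, mul_comm, pow_mul, hζ.pow_eq_one, one_pow, inv_one,
      sub_self, zero_div]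
  simp only [eigenProj, ← Finset.smul_sum]
  rw [Finset.sum_comm]
  simp only [← Finset.sum_smul]
  rw [Finset.sum_congr rfl fun j hj => by rw [hchar j hj], Finset.sum_eq_single 0]
  · simp [hT]
  · intro j _ hj
    simp [hj]
  · intro h
    exact absurd (Finset.mem_range.2 (Nat.pos_of_ne_zero (by rintro rfl; simp at hT))) h

theorem le_comap_eigenProj {W : Submodule K M} (hW : W ≤ W.comap f) (k : ℕ) :
    W ≤ W.comap (f.eigenProj ζ T k) := by
  intro x hx
  rw [Submodule.mem_comap, eigenProj, LinearMap.smul_apply, LinearMap.sum_apply]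
  refine W.smul_mem _ (W.sum_mem fun j _ => ?_)
  rw [LinearMap.smul_apply]
  exact W.smul_mem _ (Submodule.le_comap_pow_of_le_comap W hW j hx)

end Module.End

theorem LinearEquiv.toLinearMap_pow_eq_one {R M : Type*} [Semiring R] [AddCommMonoid M]
    [Module R M] {e : M ≃ₗ[R] M} {n : ℕ} (he : e ^ n = 1) : (e : Module.End R M) ^ n = 1 := by
  rw [← LinearEquiv.automorphismGroup.toLinearMapMonoidHom_apply, ← map_pow, he, map_one]

namespace VOSA

theorem wtSpace_eq_eigenspace_L0 (A : VOSA V) :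
    A.wtSpace = fun p : ℚ => A.L0.eigenspace (p : ℂ) :=
  ((A.L0.eigenspaces_iSupIndep.comp Rat.cast_injective).le_iff_eq_of_iSup_eq_top
    A.grading.submodule_iSup_eq_top).1 fun p v hv =>
      Module.End.mem_eigenspace_iff.2 (A.L0_grading p v hv)

theorem Aut.apply_mem_wtSpace {A : VOSA V} (t : A.Aut) {p : ℚ} {a : V}
    (ha : a ∈ A.wtSpace p) : t.g a ∈ A.wtSpace p := by
  rw [wtSpace_eq_eigenspace_L0, Module.End.mem_eigenspace_iff] at ha ⊢
  calc A.L0 (t.g a) = t.g (A.L0 a) := by rw [L0, t.equivariant, t.fix_omega]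
    _ = (p : ℂ) • t.g a := by rw [ha, map_smul]

end VOSA

theorem circGElem_vac (A : VOSA V) {T r : ℕ} (hr : r ≠ 0) (p : ℚ) (u : V) :
    circGElem A T r p u A.vac = u := by
  rw [circGElem, finsum_eq_single _ 0]
  · simp [hr, qchoose, A.creation]
  · intro i hi
    rw [if_neg hr, A.creation' u _ (by omega), smul_zero]

section TwistedZhu

open Module.End

theorem eigSp_eq_eigenspace (f : V ≃ₗ[ℂ] V) (T r : ℕ) :
    eigSp f T r = eigenspace f.toLinearMap (exp (2 * Real.pi * I / T) ^ r) := by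
  rw [eigSp, ← Complex.exp_nat_mul]
  congr 2
  ring

variable (A : VOSA V) {f : V ≃ₗ[ℂ] V} {T : ℕ}

theorem eigenProj_mem_eigSp (hT : 0 < T) (hfT : f ^ T = 1) (r : ℕ) (v : V) :
    eigenProj f.toLinearMap (exp (2 * Real.pi * I / T)) T r v ∈ eigSp f T r := by
  rw [eigSp_eq_eigenspace]
  exact eigenProj_apply_mem_eigenspace (Complex.isPrimitiveRoot_exp T hT.ne').pow_eq_one
    (LinearEquiv.toLinearMap_pow_eq_one hfT) r v

theorem mem_Og_of_mem_wtSpace {r : ℕ} (hr0 : r ≠ 0) (hrT : r < T) {p : ℚ} {u : V}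
    (hu : u ∈ eigSp f T r) (hup : u ∈ A.wtSpace p) : u ∈ Og A f T :=
  Submodule.subset_span ⟨r, p, u, A.vac, hrT, hu, hup, (circGElem_vac A hr0 p u).symm⟩

variable (hT : 0 < T) (hfT : f ^ T = 1) (hf : ∀ p, ∀ a ∈ A.wtSpace p, f a ∈ A.wtSpace p)
include hT hfT hf

theorem eigenProj_mem_Og {r : ℕ} (hr0 : r ≠ 0) (hrT : r < T) (v : V) :
    eigenProj f.toLinearMap (exp (2 * Real.pi * I / T)) T r v ∈ Og A f T := by
  have hV : (⊤ : Submodule ℂ V) ≤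
      (Og A f T).comap (eigenProj f.toLinearMap (exp (2 * Real.pi * I / T)) T r) := by
    rw [← A.grading.submodule_iSup_eq_top]
    exact iSup_le fun p x hx => mem_Og_of_mem_wtSpace A hr0 hrT (eigenProj_mem_eigSp hT hfT r x)
      (le_comap_eigenProj (hf p) r hx)
  exact hV Submodule.mem_top

theorem eigSp_le_Og {r : ℕ} (hr0 : 0 < r) (hrT : r < T) : eigSp f T r ≤ Og A f T := by
  intro u hu
  rw [eigSp_eq_eigenspace] at hu
  rw [← eigenProj_apply_of_mem_eigenspace (Complex.isPrimitiveRoot_exp T hT.ne').pow_eq_one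
    (Nat.cast_ne_zero.2 hT.ne') hu]
  exact eigenProj_mem_Og A hT hfT hf hr0.ne' hrT u

theorem sub_eigenProj_zero_mem_Og (v : V) :
    v - eigenProj f.toLinearMap (exp (2 * Real.pi * I / T)) T 0 v ∈ Og A f T := by
  obtain ⟨n, rfl⟩ := Nat.exists_eq_add_one_of_ne_zero hT.ne'
  have hsum := LinearMap.congr_fun (sum_eigenProj (f := f.toLinearMap)
    (Complex.isPrimitiveRoot_exp _ hT.ne') (Nat.cast_ne_zero.2 hT.ne')) v
  rw [Finset.sum_range_succ', LinearMap.add_apply, LinearMap.sum_apply, one_apply] at hsum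
  rw [← eq_sub_of_add_eq hsum]
  exact Submodule.sum_mem _ fun r hr =>
    eigenProj_mem_Og A hT hfT hf r.succ_ne_zero (Nat.succ_lt_succ (Finset.mem_range.1 hr)) v

end TwistedZhu

theorem stmt4_general (A : VOSA V) (g s : VOSA.Aut A) (T : ℕ)
    (hT : orderOf (g.g.trans s.g) = T) (h1 : 0 < T) :
    (∀ r : ℕ, 0 < r → r < T → eigSp (g.g.trans s.g) T r ≤ Og A (g.g.trans s.g) T) ∧
    Function.Surjective
      ((Og A (g.g.trans s.g) T).mkQ ∘ₗ (eigSp (g.g.trans s.g) T 0).subtype) := by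
  have hfT : g.g.trans s.g ^ T = 1 := hT ▸ pow_orderOf_eq_one _
  have hf : ∀ p, ∀ a ∈ A.wtSpace p, g.g.trans s.g a ∈ A.wtSpace p :=
    fun p a ha => s.apply_mem_wtSpace (g.apply_mem_wtSpace ha)
  refine ⟨fun r hr hrT => eigSp_le_Og A h1 hfT hf hr hrT, fun x => ?_⟩
  obtain ⟨v, rfl⟩ := Submodule.mkQ_surjective _ x
  exact ⟨⟨_, eigenProj_mem_eigSp h1 hfT 0 v⟩,
    ((Submodule.Quotient.eq _).2 (sub_eigenProj_zero_mem_Og A h1 hfT hf v)).symm⟩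

/-- If `r ≠ 0` then `V^{r*} ⊆ O_g(V)`; hence `A_g(V) = V/O_g(V)` is
a quotient of `V^{0*}/(O_g(V) ∩ V^{0*})`, i.e. the composite
`V^{0*} → V → V/O_g(V)` is surjective. -/
theorem stmt4 (A : VOSA V) (g s : VOSA.Aut A) (hs : A.IsParityAut s) (T : ℕ)
    (hT : orderOf (g.g.trans s.g) = T) (h1 : 0 < T) :
    (∀ r : ℕ, 0 < r → r < T → eigSp (g.g.trans s.g) T r ≤ Og A (g.g.trans s.g) T) ∧
    Function.Surjective
      ((Og A (g.g.trans s.g) T).mkQ ∘ₗ (eigSp (g.g.trans s.g) T 0).subtype) :=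
  stmt4_general A g s T hT h1
end
end

section
/- For homogeneous u ∈ V^{r*} and v ∈ V and integers m ≥ n ≥ 0, the element Res_z ((1+z)^{wt u − 1 + δ_r + r/T + n} / z^{m + δ_r + 1}) Y(u,z)v lies in O_g(V). -/
open Complex DirectSum
open scoped Classical

noncomputable section

variable {V : Type} [AddCommGroup V] [Module ℂ V]

/-! ### Auxiliary lemmas for Statement 5 -/

lemma qchoose_zero' (x : ℚ) : qchoose x 0 = 1 := by simp [qchoose]

lemma qchoose_prod_succ (x : ℚ) (i : ℕ) :
    ∏ j ∈ Finset.range (i+1), (x + 1 - (j:ℚ)) = (x+1) * ∏ j ∈ Finset.range i, (x - (j:ℚ)) := by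
  rw [Finset.prod_range_succ']
  rw [Finset.prod_congr rfl (fun j _ => show x + 1 - ((j+1 : ℕ):ℚ) = x - j by push_cast; ring)]
  push_cast
  ring

lemma qchoose_pascal (x : ℚ) (i : ℕ) :
    qchoose (x+1) (i+1) = qchoose x (i+1) + qchoose x i := by
  unfold qchoose
  rw [qchoose_prod_succ, Finset.prod_range_succ, Nat.factorial_succ]
  have h0 : ((Nat.factorial i : ℚ)) ≠ 0 := by exact_mod_cast (Nat.factorial_ne_zero i)
  have h2 : ((i:ℚ)+1) ≠ 0 := by positivity
  push_cast
  field_simp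
  ring

lemma qchoose_absorb (x : ℚ) (i : ℕ) :
    ((i:ℚ)+1) * qchoose (x+1) (i+1) = (x+1) * qchoose x i := by
  unfold qchoose
  rw [qchoose_prod_succ, Nat.factorial_succ]
  have h0 : ((Nat.factorial i : ℚ)) ≠ 0 := by exact_mod_cast (Nat.factorial_ne_zero i)
  have h2 : ((i:ℚ)+1) ≠ 0 := by positivity
  push_cast
  field_simp

/-- The basic sum `Res_z (1+z)^β z^{-k-δ} Y(u,z)v` in mode form. -/
def Esum (A : VOSA V) (δ : ℤ) (β : ℚ) (u v : V) (k : ℤ) : V :=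
  ∑ᶠ i : ℕ, ((qchoose β i : ℚ) : ℂ) • A.Y u ((i:ℤ) - k - δ) v

lemma finsum_mode_eq (A : VOSA V) (u v : V) (δ k : ℤ) (c : ℕ → ℂ) (N : ℤ)
    (hN : ∀ n ≥ N, A.Y u n v = 0) (M : ℕ) (hM : N + k + δ ≤ (M:ℤ)) :
    ∑ᶠ i : ℕ, c i • A.Y u ((i:ℤ) - k - δ) v
      = ∑ i ∈ Finset.range M, c i • A.Y u ((i:ℤ) - k - δ) v := by
  apply finsum_eq_finset_sum_of_support_subset
  intro i hi
  simp only [Function.mem_support, ne_eq] at hi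
  simp only [Finset.coe_range, Set.mem_Iio]
  by_contra h
  push_neg at h
  apply hi
  have hMi : (M:ℤ) ≤ (i:ℤ) := by exact_mod_cast h
  rw [hN ((i:ℤ) - k - δ) (by omega), smul_zero]

lemma Esum_pascal (A : VOSA V) (u v : V) (δ : ℤ) (β : ℚ) (k : ℤ) :
    Esum A δ (β+1) u v k = Esum A δ β u v k + Esum A δ β u v (k-1) := by
  obtain ⟨N, hN⟩ := A.trunc u v
  obtain ⟨M, hM⟩ : ∃ M : ℕ, N + k + δ ≤ (M:ℤ) :=
    ⟨(N + k + δ).toNat, Int.self_le_toNat _⟩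
  have hb : A.Y u ((M:ℤ) - k - δ) v = 0 := hN _ (by omega)
  unfold Esum
  rw [finsum_mode_eq A u v δ k _ N hN M hM,
    finsum_mode_eq A u v δ k _ N hN M hM,
    finsum_mode_eq A u v δ (k-1) _ N hN M (by omega)]
  rw [← sub_eq_iff_eq_add', ← Finset.sum_sub_distrib]
  simp only [← sub_smul]
  calc
    ∑ i ∈ Finset.range M,
        (((qchoose (β+1) i : ℚ):ℂ) - ((qchoose β i : ℚ):ℂ)) • A.Y u ((i:ℤ) - k - δ) v
      = ∑ i ∈ Finset.range (M+1),
        (((qchoose (β+1) i : ℚ):ℂ) - ((qchoose β i : ℚ):ℂ)) • A.Y u ((i:ℤ) - k - δ) v := by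
        rw [Finset.sum_range_succ, hb, smul_zero, add_zero]
    _ = (∑ i ∈ Finset.range M,
        (((qchoose (β+1) (i+1) : ℚ):ℂ) - ((qchoose β (i+1) : ℚ):ℂ)) •
          A.Y u (((i+1:ℕ):ℤ) - k - δ) v)
        + (((qchoose (β+1) 0 : ℚ):ℂ) - ((qchoose β 0 : ℚ):ℂ)) • A.Y u (((0:ℕ):ℤ) - k - δ) v := by
        exact Finset.sum_range_succ' _ M
    _ = ∑ i ∈ Finset.range M, ((qchoose β i : ℚ):ℂ) • A.Y u ((i:ℤ) - (k-1) - δ) v := by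
        rw [qchoose_zero', qchoose_zero', sub_self, zero_smul, add_zero]
        apply Finset.sum_congr rfl
        intro i _
        rw [show ((i+1:ℕ):ℤ) - k - δ = (i:ℤ) - (k-1) - δ by push_cast; ring]
        congr 1
        rw [qchoose_pascal]
        push_cast
        ring

lemma Esum_key (A : VOSA V) (u v : V) (δ : ℤ) (hδ : 0 ≤ δ) (β : ℚ) (m : ℕ) :
    ((m:ℂ) + 1 + (δ:ℂ)) • Esum A δ β u v ((m:ℤ)+2) =
      Esum A δ (β+1) (A.Y A.ω 0 u) v ((m:ℤ)+1)
        + (((β:ℂ)+1) - ((m:ℂ)+1+(δ:ℂ))) • Esum A δ β u v ((m:ℤ)+1) := by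
  obtain ⟨N, hN⟩ := A.trunc u v
  obtain ⟨M, hM⟩ : ∃ M : ℕ, N + ((m:ℤ)+2) + δ ≤ (M:ℤ) :=
    ⟨(N + ((m:ℤ)+2) + δ).toNat, Int.self_le_toNat _⟩
  have htrans : ∀ i : ℕ,
      ((qchoose (β+1) i : ℚ):ℂ) • A.Y (A.Y A.ω 0 u) ((i:ℤ) - ((m:ℤ)+1) - δ) v
      = (((qchoose (β+1) i : ℚ):ℂ) * (((m:ℂ)+1+(δ:ℂ)) - (i:ℂ))) •
          A.Y u ((i:ℤ) - ((m:ℤ)+2) - δ) v := by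
    intro i
    rw [A.translation u ((i:ℤ) - ((m:ℤ)+1) - δ), LinearMap.smul_apply, smul_smul,
      show (i:ℤ) - ((m:ℤ)+1) - δ - 1 = (i:ℤ) - ((m:ℤ)+2) - δ by ring]
    congr 1
    push_cast
    ring
  have hEu' : Esum A δ (β+1) (A.Y A.ω 0 u) v ((m:ℤ)+1)
      = ∑ᶠ i : ℕ, (((qchoose (β+1) i : ℚ):ℂ) * (((m:ℂ)+1+(δ:ℂ)) - (i:ℂ))) •
          A.Y u ((i:ℤ) - ((m:ℤ)+2) - δ) v := by
    unfold Esum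
    exact finsum_congr htrans
  rw [hEu']
  unfold Esum
  rw [finsum_mode_eq A u v δ ((m:ℤ)+2) _ N hN (M+1) (by push_cast; omega),
    finsum_mode_eq A u v δ ((m:ℤ)+2) _ N hN (M+1) (by push_cast; omega),
    finsum_mode_eq A u v δ ((m:ℤ)+1) _ N hN (M+1) (by push_cast; omega),
    Finset.smul_sum, Finset.smul_sum]
  rw [← sub_eq_iff_eq_add', ← Finset.sum_sub_distrib]
  simp only [smul_smul, ← sub_smul]
  have hbM : A.Y u (((M:ℕ):ℤ) - ((m:ℤ)+2) - δ) v = 0 := hN _ (by omega)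
  have hbM' : A.Y u (((M:ℕ):ℤ) - ((m:ℤ)+1) - δ) v = 0 := hN _ (by omega)
  calc
    ∑ i ∈ Finset.range (M+1),
        ((((m:ℂ)+1+(δ:ℂ)) * ((qchoose β i : ℚ):ℂ)
          - ((qchoose (β+1) i : ℚ):ℂ) * (((m:ℂ)+1+(δ:ℂ)) - (i:ℂ)))) •
            A.Y u ((i:ℤ) - ((m:ℤ)+2) - δ) v
      = (∑ i ∈ Finset.range M,
        ((((m:ℂ)+1+(δ:ℂ)) * ((qchoose β (i+1) : ℚ):ℂ)
          - ((qchoose (β+1) (i+1) : ℚ):ℂ) * (((m:ℂ)+1+(δ:ℂ)) - ((i+1:ℕ):ℂ)))) •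
            A.Y u (((i+1:ℕ):ℤ) - ((m:ℤ)+2) - δ) v)
        + ((((m:ℂ)+1+(δ:ℂ)) * ((qchoose β 0 : ℚ):ℂ)
          - ((qchoose (β+1) 0 : ℚ):ℂ) * (((m:ℂ)+1+(δ:ℂ)) - ((0:ℕ):ℂ)))) •
            A.Y u (((0:ℕ):ℤ) - ((m:ℤ)+2) - δ) v := Finset.sum_range_succ' _ M
    _ = ∑ i ∈ Finset.range M,
        (((((β:ℂ)+1) - ((m:ℂ)+1+(δ:ℂ))) * ((qchoose β i : ℚ):ℂ)) •
          A.Y u ((i:ℤ) - ((m:ℤ)+1) - δ) v) := by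
        rw [qchoose_zero', qchoose_zero']
        rw [show (((m:ℂ)+1+(δ:ℂ)) * ((1:ℚ):ℂ) - ((1:ℚ):ℂ) * (((m:ℂ)+1+(δ:ℂ)) - ((0:ℕ):ℂ)))
            = 0 by push_cast; ring, zero_smul, add_zero]
        apply Finset.sum_congr rfl
        intro i _
        rw [show ((i+1:ℕ):ℤ) - ((m:ℤ)+2) - δ = (i:ℤ) - ((m:ℤ)+1) - δ by push_cast; ring]
        congr 1
        have hp := qchoose_pascal β i
        have ha := qchoose_absorb β i
        have hpc : ((qchoose (β+1) (i+1) : ℚ):ℂ)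
            = ((qchoose β (i+1) : ℚ):ℂ) + ((qchoose β i : ℚ):ℂ) := by exact_mod_cast hp
        have hac : ((i:ℂ)+1) * ((qchoose (β+1) (i+1) : ℚ):ℂ)
            = ((β:ℂ)+1) * ((qchoose β i : ℚ):ℂ) := by exact_mod_cast ha
        push_cast
        push_cast at hpc hac
        linear_combination (-((m:ℂ)+1+(δ:ℂ))) * hpc + hac
    _ = ∑ i ∈ Finset.range (M+1),
        (((((β:ℂ)+1) - ((m:ℂ)+1+(δ:ℂ))) * ((qchoose β i : ℚ):ℂ)) •
          A.Y u ((i:ℤ) - ((m:ℤ)+1) - δ) v) := by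
        rw [Finset.sum_range_succ, hbM', smul_zero, add_zero]


lemma baseD (A : VOSA V) (g s : VOSA.Aut A) (T : ℕ) (r : ℕ) (hr : r < T) (v : V) :
    ∀ (m : ℕ) (p : ℚ) (u : V), u ∈ eigSp (g.g.trans s.g) T r → u ∈ A.wtSpace p →
      Esum A (if r = 0 then 1 else 0) (p - 1 + deltaR r + (r:ℚ)/T) u v ((m:ℤ)+1)
        ∈ Og A (g.g.trans s.g) T := by
  intro m
  induction m with
  | zero =>
    intro p u hu hup
    apply Submodule.subset_span
    refine ⟨r, p, u, v, hr, hu, hup, ?_⟩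
    unfold Esum circGElem
    norm_num
  | succ m ih =>
    intro p u hu hup
    have hu' : A.Y A.ω 0 u ∈ eigSp (g.g.trans s.g) T r := by
      simp only [eigSp, Module.End.mem_eigenspace_iff, LinearEquiv.coe_coe] at hu ⊢
      rw [LinearEquiv.trans_apply, g.equivariant, g.fix_omega, s.equivariant, s.fix_omega]
      rw [show s.g (g.g u) = Complex.exp (2 * Real.pi * Complex.I * r / T) • u from hu]
      exact map_smul (A.Y A.ω 0) _ u
    have hup' : A.Y A.ω 0 u ∈ A.wtSpace (p+1) := by
      have h := A.mode_wt 2 p A.ω u 0 A.omega_wt hup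
      rwa [show (2:ℚ) + p - ((0:ℤ):ℚ) - 1 = p + 1 by push_cast; ring] at h
    have h1 := ih (p+1) (A.Y A.ω 0 u) hu' hup'
    have h2 := ih p u hu hup
    rw [show (p+1) - 1 + deltaR r + (r:ℚ)/T = (p - 1 + deltaR r + (r:ℚ)/T) + 1 by ring] at h1
    rw [show (((m+1:ℕ):ℤ)+1) = (m:ℤ)+2 by push_cast; ring]
    obtain ⟨δ, hδdef⟩ : ∃ δ' : ℤ, (if r = 0 then (1:ℤ) else 0) = δ' := ⟨_, rfl⟩
    have hδ : 0 ≤ δ := by rw [← hδdef]; split <;> norm_num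
    rw [hδdef] at h1 h2 ⊢
    have hC : ((m:ℂ)+1+(δ:ℂ)) ≠ 0 := by
      have h0 : ((m:ℤ)+1+δ) ≠ 0 := by omega
      have := (Int.cast_ne_zero (α := ℂ)).mpr h0
      push_cast at this
      exact this
    have key := Esum_key A u v δ hδ (p - 1 + deltaR r + (r:ℚ)/T) m
    have heq : Esum A δ (p - 1 + deltaR r + (r:ℚ)/T) u v ((m:ℤ)+2)
        = ((m:ℂ)+1+(δ:ℂ))⁻¹ •
          (Esum A δ ((p - 1 + deltaR r + (r:ℚ)/T)+1) (A.Y A.ω 0 u) v ((m:ℤ)+1)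
            + (((p - 1 + deltaR r + (r:ℚ)/T : ℚ):ℂ)+1 - ((m:ℂ)+1+(δ:ℂ))) •
              Esum A δ (p - 1 + deltaR r + (r:ℚ)/T) u v ((m:ℤ)+1)) := by
      rw [← key, smul_smul, inv_mul_cancel₀ hC, one_smul]
    rw [heq]
    exact Submodule.smul_mem _ _ (Submodule.add_mem _ h1 (Submodule.smul_mem _ _ h2))

/-- For homogeneous `u ∈ V^{r*}` of weight `p`, any `v`, and
`m ≥ n ≥ 0`, `Res_z (1+z)^{p-1+δ_r+r/T+n} z^{-m-δ_r-1} Y(u,z)v ∈ O_g(V)`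
(in mode form). -/
theorem stmt5 (A : VOSA V) (g s : VOSA.Aut A) (hs : A.IsParityAut s) (T : ℕ)
    (hT : orderOf (g.g.trans s.g) = T) (h1 : 0 < T)
    (r : ℕ) (hr : r < T) (p : ℚ) (u v : V)
    (hu : u ∈ eigSp (g.g.trans s.g) T r) (hup : u ∈ A.wtSpace p)
    (m n : ℕ) (hmn : n ≤ m) :
    (∑ᶠ i : ℕ, ((qchoose (p - 1 + deltaR r + (r : ℚ) / T + (n : ℚ)) i : ℚ) : ℂ) •
      A.Y u ((i : ℤ) - (m : ℤ) - 1 - (if r = 0 then 1 else 0)) v)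
      ∈ Og A (g.g.trans s.g) T := by
  have main : ∀ (n m : ℕ), n ≤ m →
      Esum A (if r = 0 then 1 else 0)
        (p - 1 + deltaR r + (r:ℚ)/T + (n:ℚ)) u v ((m:ℤ)+1) ∈ Og A (g.g.trans s.g) T := by
    intro n
    induction n with
    | zero =>
      intro m _
      rw [show p - 1 + deltaR r + (r:ℚ)/T + ((0:ℕ):ℚ) = p - 1 + deltaR r + (r:ℚ)/T by
        push_cast; ring]
      exact baseD A g s T r hr v m p u hu hup
    | succ n ih =>
      intro m hnm
      match m, hnm with
      | (m'+1), hnm =>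
        rw [show p - 1 + deltaR r + (r:ℚ)/T + ((n+1:ℕ):ℚ)
            = (p - 1 + deltaR r + (r:ℚ)/T + (n:ℚ)) + 1 by push_cast; ring]
        rw [Esum_pascal]
        apply Submodule.add_mem
        · have := ih (m'+1) (by omega)
          rwa [show (((m'+1:ℕ):ℤ)+1) = ((m'+1:ℕ):ℤ)+1 from rfl] at this
        · have := ih m' (by omega)
          rwa [show ((m':ℤ)+1) = ((m'+1:ℕ):ℤ)+1-1 by push_cast; ring] at this
  have hgoal : (∑ᶠ i : ℕ, ((qchoose (p - 1 + deltaR r + (r : ℚ) / T + (n : ℚ)) i : ℚ) : ℂ) •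
      A.Y u ((i : ℤ) - (m : ℤ) - 1 - (if r = 0 then 1 else 0)) v)
      = Esum A (if r = 0 then 1 else 0) (p - 1 + deltaR r + (r:ℚ)/T + (n:ℚ)) u v ((m:ℤ)+1) := by
    unfold Esum
    apply finsum_congr
    intro i
    rw [show (i:ℤ) - ((m:ℤ)+1) - (if r = 0 then 1 else 0)
        = (i:ℤ) - (m:ℤ) - 1 - (if r = 0 then 1 else 0) by ring]
  rw [hgoal]
  exact main n m hmn
end
end

section
/- The degree-zero part V[g]_0 of the graded Lie superalgebra V[g] is spanned by elements o(a) = a(wt a − 1) for homogeneous a ∈ V^{0*}, and the kernel of the linear map V^{0*} → V[g]_0, a ↦ o(a), is (L(−1) + L(0))V^{0*}; hence V[g]_0 ≅ V^{0*}/(L(−1)+L(0))V^{0*} as Lie superalgebras, with induced bracket [a,b] = Σ_{j≥0} C(wt a − 1, j) a_j b. -/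
open Complex DirectSum
open scoped Classical

noncomputable section

variable {V : Type} [AddCommGroup V] [Module ℂ V]

/-!
A degree-zero element of `L(V,g)` is a sum of terms `t^q ⊗ x` with `wt x = q + 1`, i.e. of
elements `o(x)`. Since the parity automorphism `σ` acts on `V_w` by `e^{2πiw}`, a homogeneous
`x ∈ V_w` lies in the `e^{2πir/T₀}`-eigenspace of `g` with `w ∈ r/T₀ + ℤ` exactly when
`gσ x = x`.
For the kernel, `Σ_q t^q ⊗ x_q ↦ Σ_q (x_q)_{(q+1)}` is a left inverse of `o` which sends
`D(t^q ⊗ x)` to `(L(-1) + L(0)) x_{(q)}`; conversely `D(t^p ⊗ x) = o((L(-1) + L(0)) x)` for `x`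
of weight `p`, and the homogeneous components of an element of `V^{0*}` lie in the
eigenspaces of `g` that `L(V,g)` allows. The bracket formula is the expansion of the
`0`-th product, which lands in degree zero on the nose.
-/

section WeightProjections

variable (A : VOSA V)

lemma projWt_mem (p : ℚ) (x : V) : projWt A p x ∈ A.wtSpace p :=
  SetLike.coe_mem _

lemma projWt_of_mem {w : ℚ} {x : V} (hx : x ∈ A.wtSpace w) (p : ℚ) :
    projWt A p x = if p = w then x else 0 := by
  change ((LinearEquiv.ofBijective (DirectSum.coeLinearMap A.wtSpace) A.grading).symm x p : V) = _
  rcases eq_or_ne w p with rfl | h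
  · simp [A.grading.ofBijective_coeLinearMap_of_mem hx]
  · simp [A.grading.ofBijective_coeLinearMap_of_mem_ne h hx, Ne.symm h]

lemma hasFiniteSupport_projWt (x : V) : (fun p => projWt A p x).HasFiniteSupport :=
  DirectSum.hasFiniteSupport A.wtSpace _

lemma finsum_projWt (x : V) : ∑ᶠ p, projWt A p x = x := by
  classical
  set e := LinearEquiv.ofBijective (DirectSum.coeLinearMap A.wtSpace) A.grading
  calc ∑ᶠ p, projWt A p x = ∑ p ∈ (e.symm x).support, (e.symm x p : V) :=
        finsum_eq_sum_of_support_subset _ (DirectSum.support_subset A.wtSpace _)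
    _ = e (e.symm x) := (DirectSum.coeLinearMap_eq_dfinsuppSum _ _).symm
    _ = x := e.apply_symm_apply x

lemma map_eq_finsum_projWt {M F : Type*} [AddCommMonoid M] [FunLike F V M]
    [AddMonoidHomClass F V M] (φ : F) (x : V) : φ x = ∑ᶠ p, φ (projWt A p x) := by
  conv_lhs => rw [← finsum_projWt A x]
  exact map_finsum φ (hasFiniteSupport_projWt A x)

lemma mem_wtSpace_of_projWt_eq_zero {w : ℚ} {x : V} (h : ∀ p ≠ w, projWt A p x = 0) :
    x ∈ A.wtSpace w := by
  rw [← finsum_projWt A x, finsum_eq_single _ w h]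
  exact projWt_mem A w x

lemma projWt_map_of_wt_shift (φ : V →ₗ[ℂ] V) (c : ℚ)
    (hφ : ∀ q x, x ∈ A.wtSpace q → φ x ∈ A.wtSpace (q + c)) (p : ℚ) (x : V) :
    projWt A (p + c) (φ x) = φ (projWt A p x) := by
  rw [← LinearMap.comp_apply, map_eq_finsum_projWt A ((projWt A (p + c)).comp φ),
    finsum_eq_single _ p]
  · simp [projWt_of_mem A (hφ p _ (projWt_mem A p x))]
  · intro q hq
    simp [projWt_of_mem A (hφ q _ (projWt_mem A q x)), hq.symm]

lemma L0_apply_of_mem {w : ℚ} {x : V} (hx : x ∈ A.wtSpace w) : A.L0 x = (w : ℂ) • x :=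
  A.L0_grading w x hx

lemma Lm1_mem_wtSpace {w : ℚ} {x : V} (hx : x ∈ A.wtSpace w) :
    A.Lm1 x ∈ A.wtSpace (w + 1) := by
  convert A.mode_wt 2 w A.ω x 0 A.omega_wt hx using 2
  · push_cast; ring
  · rfl

lemma projWt_L0 (p : ℚ) (x : V) : projWt A p (A.L0 x) = (p : ℂ) • projWt A p x := by
  have := projWt_map_of_wt_shift A A.L0 0 (fun q y hy => by
    rw [add_zero, L0_apply_of_mem A hy]; exact Submodule.smul_mem _ _ hy) p x
  rwa [add_zero, L0_apply_of_mem A (projWt_mem A p x)] at this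

lemma projWt_add_one_Lm1 (p : ℚ) (x : V) :
    projWt A (p + 1) (A.Lm1 x) = A.Lm1 (projWt A p x) :=
  projWt_map_of_wt_shift A A.Lm1 1 (fun _ _ => Lm1_mem_wtSpace A) p x

lemma mem_wtSpace_of_L0_eq {w : ℚ} {x : V} (h : A.L0 x = (w : ℂ) • x) :
    x ∈ A.wtSpace w := by
  refine mem_wtSpace_of_projWt_eq_zero A fun p hp => ?_
  have hsub : ((w : ℂ) - p) • projWt A p x = 0 := by
    rw [sub_smul, ← map_smul, ← h, projWt_L0, sub_self]
  exact (smul_eq_zero.mp hsub).resolve_left (sub_ne_zero.mpr (by exact_mod_cast hp.symm))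

lemma VOSA.Aut.map_mem_wtSpace (e : A.Aut) {w : ℚ} {x : V} (hx : x ∈ A.wtSpace w) :
    e.g x ∈ A.wtSpace w := by
  apply mem_wtSpace_of_L0_eq
  rw [VOSA.L0, ← e.fix_omega, ← e.equivariant, ← VOSA.L0, L0_apply_of_mem A hx, map_smul]

lemma projWt_aut (e : A.Aut) (p : ℚ) (x : V) : projWt A p (e.g x) = e.g (projWt A p x) := by
  simpa using projWt_map_of_wt_shift A e.g.toLinearMap 0
    (fun q y hy => by rw [add_zero]; exact e.map_mem_wtSpace A hy) p x

end WeightProjections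

section Parity

open Real

lemma mem_eigSp_iff {f : V ≃ₗ[ℂ] V} {T r : ℕ} {x : V} :
    x ∈ eigSp f T r ↔ f x = Complex.exp (2 * π * I * r / T) • x :=
  Module.End.mem_eigenspace_iff

lemma mem_eigSp_zero_iff {f : V ≃ₗ[ℂ] V} {T : ℕ} {x : V} :
    x ∈ eigSp f T 0 ↔ f x = x := by
  simp [mem_eigSp_iff]

lemma exp_two_pi_I_mul_int_add (a : ℤ) (z : ℂ) :
    Complex.exp (2 * π * I * (a + z)) = Complex.exp (2 * π * I * z) := by
  rw [mul_add, Complex.exp_add, mul_comm _ (a : ℂ), Complex.exp_int_mul_two_pi_mul_I, one_mul]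

lemma exp_two_pi_I_mul_eq_of_eq_int_add {w : ℚ} {a : ℤ} {r T₀ : ℕ} (h : w = a + r / T₀) :
    Complex.exp (2 * π * I * r / T₀) = Complex.exp (2 * π * I * w) := by
  rw [h, Rat.cast_add, Rat.cast_intCast, exp_two_pi_I_mul_int_add]
  push_cast
  ring_nf

variable (A : VOSA V)

lemma exp_two_pi_I_mul_sq_of_mem_wtSpace {w : ℚ} {x : V} (hx : x ∈ A.wtSpace w)
    (hx0 : x ≠ 0) :
    Complex.exp (2 * π * I * w) ^ 2 = 1 := by
  obtain ⟨m, rfl⟩ := A.halfInt w fun h => hx0 (by rwa [h, Submodule.mem_bot] at hx)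
  rw [← Complex.exp_nat_mul, ← Complex.exp_int_mul_two_pi_mul_I m]
  push_cast
  ring_nf

lemma VOSA.IsParityAut.apply_eq_exp {s : A.Aut} (hs : A.IsParityAut s) {w : ℚ} {x : V}
    (hx : x ∈ A.wtSpace w) : s.g x = Complex.exp (2 * π * I * w) • x := by
  rcases eq_or_ne x 0 with rfl | hx0
  · simp
  obtain ⟨m, rfl⟩ := A.halfInt w fun h => hx0 (by rwa [h, Submodule.mem_bot] at hx)
  rcases Int.even_or_odd' m with ⟨k, rfl | rfl⟩
  · have hk : ((2 * k : ℤ) : ℚ) / 2 = (k : ℤ) := by push_cast; ring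
    rw [hk] at hx ⊢
    rw [hs.1 x (le_iSup (fun n : ℤ => A.wtSpace n) k hx), Rat.cast_intCast,
      mul_comm, Complex.exp_int_mul_two_pi_mul_I, one_smul]
  · have hk : ((2 * k + 1 : ℤ) : ℚ) / 2 = (k : ℤ) + 1 / 2 := by push_cast; ring
    rw [hk] at hx ⊢
    rw [hs.2 x (le_iSup (fun n : ℤ => A.wtSpace (n + 1 / 2)) k hx)]
    push_cast
    rw [exp_two_pi_I_mul_int_add, show 2 * π * I * (1 / 2) = π * I by ring,
      Complex.exp_pi_mul_I, neg_one_smul]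

lemma projWt_mem_eigSp {f : V ≃ₗ[ℂ] V} (hf : ∀ p x, projWt A p (f x) = f (projWt A p x))
    {T r : ℕ} {p : ℚ} {x : V} (hx : x ∈ eigSp f T r) : projWt A p x ∈ eigSp f T r := by
  rw [mem_eigSp_iff, ← hf, mem_eigSp_iff.mp hx, map_smul]

lemma projWt_trans_aut (g s : A.Aut) (p : ℚ) (x : V) :
    projWt A p ((g.g.trans s.g) x) = (g.g.trans s.g) (projWt A p x) := by
  simp only [LinearEquiv.trans_apply, projWt_aut]

lemma mem_eigSp_fixed_iff (g s : A.Aut) (hs : A.IsParityAut s) (T : ℕ) {w : ℚ} {x : V}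
    (hx : x ∈ A.wtSpace w) :
    x ∈ eigSp (g.g.trans s.g) T 0 ↔ g.g x = Complex.exp (2 * π * I * w) • x := by
  rcases eq_or_ne x 0 with rfl | hx0
  · simp
  have hsq := exp_two_pi_I_mul_sq_of_mem_wtSpace A hx hx0
  rw [mem_eigSp_zero_iff, LinearEquiv.trans_apply, hs.apply_eq_exp A (g.map_mem_wtSpace A hx)]
  have hinv : ∀ y : V, Complex.exp (2 * π * I * w) • Complex.exp (2 * π * I * w) • y = y :=
    fun y => by rw [smul_smul, ← sq, hsq, one_smul]
  constructor
  · intro h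
    rw [← hinv (g.g x), h]
  · intro h
    rw [h, hinv]

lemma mem_eigSp_fixed_of_mem_eigSp (g s : A.Aut) (hs : A.IsParityAut s) (T : ℕ) {T₀ r : ℕ}
    {w : ℚ} {x : V} (hx : x ∈ A.wtSpace w) (hgx : x ∈ eigSp g.g T₀ r)
    (hw : ∃ a : ℤ, w = a + r / T₀) : x ∈ eigSp (g.g.trans s.g) T 0 := by
  obtain ⟨a, hw⟩ := hw
  rw [mem_eigSp_fixed_iff A g s hs T hx, ← exp_two_pi_I_mul_eq_of_eq_int_add hw]
  exact mem_eigSp_iff.mp hgx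

lemma exists_int_add_div_of_exp_pow_eq_one {w : ℚ} {T₀ : ℕ} (hT₀ : 0 < T₀)
    (h : Complex.exp (2 * π * I * w) ^ T₀ = 1) :
    ∃ r < T₀, ∃ a : ℤ, w = a + r / T₀ := by
  rw [← Complex.exp_nat_mul, Complex.exp_eq_one_iff] at h
  obtain ⟨n, hn⟩ := h
  have hwn : w * T₀ = n := by
    have : ((w * T₀ : ℚ) : ℂ) = (n : ℚ) := by
      push_cast
      have hpi : 2 * (π : ℂ) * I ≠ 0 := by simp [Real.pi_ne_zero, Complex.I_ne_zero]
      apply mul_right_cancel₀ hpi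
      linear_combination hn
    exact_mod_cast this
  have hT : (T₀ : ℤ) ≠ 0 := by positivity
  have hr := Int.toNat_of_nonneg (Int.emod_nonneg n hT)
  have hlt := Int.emod_lt_of_pos n (by positivity : (0 : ℤ) < T₀)
  refine ⟨(n % T₀).toNat, by omega, n / T₀, ?_⟩
  rw [eq_div_iff (by positivity) |>.mpr hwn,
    show ((n % T₀).toNat : ℚ) = ((n % T₀ : ℤ) : ℚ) by exact_mod_cast hr]
  nth_rewrite 1 [← Int.emod_add_mul_ediv n T₀]
  push_cast
  field_simp
  ring

lemma exists_mem_eigSp_of_mem_eigSp_fixed (g s : A.Aut) (hs : A.IsParityAut s) (T : ℕ)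
    {T₀ : ℕ} (hg : g.g ^ T₀ = 1) (hT₀ : 0 < T₀) {w : ℚ} {x : V} (hx : x ∈ A.wtSpace w)
    (hfix : x ∈ eigSp (g.g.trans s.g) T 0) (hx0 : x ≠ 0) :
    ∃ r < T₀, (∃ a : ℤ, w = a + r / T₀) ∧ x ∈ eigSp g.g T₀ r := by
  have hgx := (mem_eigSp_fixed_iff A g s hs T hx).mp hfix
  have hpow : ∀ n : ℕ, (g.g ^ n) x = Complex.exp (2 * π * I * w) ^ n • x := by
    intro n
    induction n with
    | zero => simp
    | succ n ih => rw [pow_succ, LinearEquiv.mul_apply, hgx, map_smul, ih, smul_smul, pow_succ']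
  have hroot : Complex.exp (2 * π * I * w) ^ T₀ = 1 :=
    smul_left_injective ℂ hx0 (by simpa [hg] using (hpow T₀).symm)
  obtain ⟨r, hr, a, ha⟩ := exists_int_add_div_of_exp_pow_eq_one hT₀ hroot
  exact ⟨r, hr, ⟨a, ha⟩,
    mem_eigSp_iff.mpr (by rw [exp_two_pi_I_mul_eq_of_eq_int_add ha, hgx])⟩

end Parity

section Affinization

variable (A : VOSA V)

lemma oLift_apply (a : V) (m : ℚ) : oLift A a m = projWt A (m + 1) a := by
  have hfin : (fun p => Finsupp.single (p - 1) (projWt A p a)).HasFiniteSupport :=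
    (hasFiniteSupport_projWt A a).subset fun p hp h => hp (by simp [h])
  rw [oLift, ← Finsupp.applyAddHom_apply, map_finsum _ hfin, finsum_eq_single _ (m + 1)]
  · simp
  · intro p hp
    simp [sub_eq_iff_eq_add, hp]

@[simps]
def oLiftₗ : V →ₗ[ℂ] ℚ →₀ V where
  toFun := oLift A
  map_add' x y := by ext m; simp [oLift_apply]
  map_smul' c x := by ext m; simp [oLift_apply]

lemma oLift_of_mem {w : ℚ} {x : V} (hx : x ∈ A.wtSpace w) :
    oLift A x = Finsupp.single (w - 1) x := by
  ext m
  rw [oLift_apply, projWt_of_mem A hx, Finsupp.single_apply]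
  exact if_congr ⟨fun h => by linarith, fun h => by linarith⟩ rfl rfl

-- A left inverse of `oLift`: the weight-`(q+1)` part of the coefficient of `t^q` is its
-- degree-zero part.
def oCoeff : (ℚ →₀ V) →ₗ[ℂ] V :=
  Finsupp.lsum ℂ fun q => projWt A (q + 1)

lemma oCoeff_single (q : ℚ) (x : V) : oCoeff A (Finsupp.single q x) = projWt A (q + 1) x := by
  simp [oCoeff]

lemma oCoeff_oLift (a : V) : oCoeff A (oLift A a) = a := by
  change (oCoeff A ∘ₗ oLiftₗ A) a = a
  rw [map_eq_finsum_projWt A]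
  conv_rhs => rw [← finsum_projWt A a]
  refine finsum_congr fun p => ?_
  simp [oLift_of_mem A (projWt_mem A p a), oCoeff_single, projWt_of_mem A (projWt_mem A p a)]

def wtDiag : (ℚ →₀ V) →ₗ[ℂ] V :=
  Finsupp.lsum ℂ fun q => projWt A q

lemma oCoeff_Dop (f : ℚ →₀ V) : oCoeff A (Dop A f) = (A.Lm1 + A.L0) (wtDiag A f) := by
  simp only [Dop, wtDiag, Finsupp.lsum_apply, map_finsuppSum]
  refine Finsupp.sum_congr fun q _ => ?_
  rw [map_add, map_smul, oCoeff_single, oCoeff_single, sub_add_cancel, LinearMap.add_apply,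
    L0_apply_of_mem A (projWt_mem A q _), add_comm]
  exact congrArg (· + _) (projWt_add_one_Lm1 A q _)

lemma Dop_single_of_mem {p : ℚ} {x : V} (hx : x ∈ A.wtSpace p) :
    Dop A (Finsupp.single p x) = oLift A ((A.Lm1 + A.L0) x) := by
  rw [Dop, Finsupp.sum_single_index (by simp), LinearMap.add_apply, ← oLiftₗ_apply, map_add,
    L0_apply_of_mem A hx, map_smul, oLiftₗ_apply, oLiftₗ_apply, oLift_of_mem A hx,
    oLift_of_mem A (Lm1_mem_wtSpace A hx), add_sub_cancel_right, Finsupp.smul_single, add_comm]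
  rfl

end Affinization

section DegreeZero

variable (A : VOSA V) (g s : A.Aut) {T₀ : ℕ} (T : ℕ)

lemma single_mem_LVgSet {q : ℚ} {x : V} {r : ℕ} (hr : r < T₀)
    (hq : ∃ a : ℤ, q = a + r / T₀)
    (hx : x ∈ eigSp g.g T₀ r) : Finsupp.single q x ∈ LVgSet A g T₀ := by
  intro m hm
  obtain rfl : q = m := by by_contra h; exact hm (Finsupp.single_eq_of_ne (Ne.symm h))
  obtain ⟨a, ha⟩ := hq
  exact ⟨a, r, hr, ha, by rwa [Finsupp.single_eq_same]⟩

lemma wtDiag_mem_fixed (hs : A.IsParityAut s) {f : ℚ →₀ V} (hf : f ∈ LVgSet A g T₀) :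
    wtDiag A f ∈ eigSp (g.g.trans s.g) T 0 := by
  rw [wtDiag, Finsupp.lsum_apply]
  refine Submodule.sum_mem _ fun q hq => ?_
  obtain ⟨a, r, -, hqr, hfq⟩ := hf q (Finsupp.mem_support_iff.mp hq)
  exact mem_eigSp_fixed_of_mem_eigSp A g s hs T (projWt_mem A q _)
    (projWt_mem_eigSp A (projWt_aut A g) hfq) ⟨a, hqr⟩

lemma DLsub_le_comap_oCoeff (hs : A.IsParityAut s) :
    DLsub A g T₀ ≤
      (Submodule.map (A.Lm1 + A.L0) (eigSp (g.g.trans s.g) T 0)).comap (oCoeff A) :=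
  Submodule.span_le.mpr <| by
    rintro _ ⟨f, hf, rfl⟩
    exact ⟨wtDiag A f, wtDiag_mem_fixed A g s T hs hf, (oCoeff_Dop A f).symm⟩

lemma oLift_Lm1_add_L0_mem_DLsub (hs : A.IsParityAut s) (hg : g.g ^ T₀ = 1) (hT₀ : 0 < T₀)
    {b : V} (hb : b ∈ eigSp (g.g.trans s.g) T 0) :
    oLift A ((A.Lm1 + A.L0) b) ∈ DLsub A g T₀ := by
  change (oLiftₗ A ∘ₗ (A.Lm1 + A.L0)) b ∈ _
  rw [map_eq_finsum_projWt A]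
  refine finsum_induction (· ∈ DLsub A g T₀) (zero_mem _) (fun _ _ => add_mem) fun p => ?_
  rcases eq_or_ne (projWt A p b) 0 with h | h
  · rw [LinearMap.comp_apply, h, map_zero, map_zero]
    exact zero_mem _
  obtain ⟨r, hr, hpr, hgr⟩ := exists_mem_eigSp_of_mem_eigSp_fixed A g s hs T hg hT₀
    (projWt_mem A p b) (projWt_mem_eigSp A (projWt_trans_aut A g s) hb) h
  rw [LinearMap.comp_apply, oLiftₗ_apply, ← Dop_single_of_mem A (projWt_mem A p b)]
  exact Submodule.subset_span ⟨_, single_mem_LVgSet A g hr hpr hgr, rfl⟩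

lemma oLift_mem_DLsub_iff (hs : A.IsParityAut s) (hg : g.g ^ T₀ = 1) (hT₀ : 0 < T₀) (a : V) :
    oLift A a ∈ DLsub A g T₀ ↔
      a ∈ Submodule.map (A.Lm1 + A.L0) (eigSp (g.g.trans s.g) T 0) := by
  constructor
  · intro h
    rw [← oCoeff_oLift A a]
    exact DLsub_le_comap_oCoeff A g s T hs h
  · rintro ⟨b, hb, rfl⟩
    exact oLift_Lm1_add_L0_mem_DLsub A g s T hs hg hT₀ hb

lemma mem_span_single_of_mem_LVgSet (hs : A.IsParityAut s) {f : ℚ →₀ V}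
    (hf : f ∈ LVgSet A g T₀) (hwt : ∀ q : ℚ, f q ∈ A.wtSpace (q + 1)) :
    f ∈ Submodule.span ℂ {y : ℚ →₀ V | ∃ (p : ℚ) (a : V),
      a ∈ eigSp (g.g.trans s.g) T 0 ∧ a ∈ A.wtSpace p ∧ y = Finsupp.single (p - 1) a} := by
  rw [← Finsupp.sum_single f]
  refine Submodule.sum_mem _ fun q hq => Submodule.subset_span ?_
  obtain ⟨a, r, -, hqr, hfq⟩ := hf q (Finsupp.mem_support_iff.mp hq)
  refine ⟨q + 1, f q, ?_, hwt q, by rw [add_sub_cancel_right]⟩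
  exact mem_eigSp_fixed_of_mem_eigSp A g s hs T (hwt q) hfq
    ⟨a + 1, by rw [hqr]; push_cast; ring⟩

end DegreeZero

section ZeroProduct

variable (A : VOSA V)

-- `Y` is not assumed additive in its first argument, so this needs `L(-1)`-translation.
lemma VOSA.Y_zero_of_nonneg {n : ℤ} (hn : 0 ≤ n) : A.Y 0 n = 0 := by
  have step : ∀ n : ℤ, A.Y 0 n = (-(n : ℂ)) • A.Y 0 (n - 1) := by
    simpa using A.translation 0
  induction n, hn using Int.leInduction with
  | base => simpa using step 0
  | succ n _ ih => rw [step, add_sub_cancel_right, ih, smul_zero]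

lemma VOSA.hasFiniteSupport_Y_natCast (a b : V) :
    (fun j : ℕ => A.Y a j b).HasFiniteSupport := by
  obtain ⟨N, hN⟩ := A.trunc a b
  refine (Set.finite_Iio N.toNat).subset fun j hj => ?_
  by_contra hjN
  exact hj (hN j (by simp at hjN; omega))

lemma mode0_single_single (s t : ℚ) (a b : V) :
    mode0 A (Finsupp.single s a) (Finsupp.single t b) =
      ∑ᶠ i : ℕ, ((qchoose s i : ℚ) : ℂ) • Finsupp.single (s + t - i) (A.Y a i b) := by
  rw [mode0, Finsupp.sum_single_index, Finsupp.sum_single_index] <;>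
    simp [A.Y_zero_of_nonneg]

lemma mode0_single_single_eq_oLift {p q : ℚ} {a b : V} (ha : a ∈ A.wtSpace p)
    (hb : b ∈ A.wtSpace q) :
    mode0 A (Finsupp.single (p - 1) a) (Finsupp.single (q - 1) b) =
      oLift A (∑ᶠ j : ℕ, ((qchoose (p - 1) j : ℚ) : ℂ) • A.Y a j b) := by
  rw [mode0_single_single, ← oLiftₗ_apply,
    map_finsum _ ((A.hasFiniteSupport_Y_natCast a b).fun_smul_right _)]
  refine finsum_congr fun j => ?_
  rw [map_smul, oLiftₗ_apply, oLift_of_mem A (A.mode_wt p q a b j ha hb)]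
  congr 2
  push_cast
  ring

end ZeroProduct

theorem stmt10_general (A : VOSA V) (g s : VOSA.Aut A) (hs : A.IsParityAut s)
    (T₀ T : ℕ) (hT₀ : orderOf g.g = T₀)
    (h0 : 0 < T₀) :
    (∀ f ∈ LVgSet A g T₀, (∀ q : ℚ, f q ∈ A.wtSpace (q + 1)) →
      ∃ x ∈ Submodule.span ℂ {y : ℚ →₀ V | ∃ (p : ℚ) (a : V),
          a ∈ eigSp (g.g.trans s.g) T 0 ∧ a ∈ A.wtSpace p ∧
          y = Finsupp.single (p - 1) a},
        f - x ∈ DLsub A g T₀) ∧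
    (∀ a ∈ eigSp (g.g.trans s.g) T 0,
      (oLift A a ∈ DLsub A g T₀ ↔
        a ∈ Submodule.map (A.Lm1 + A.L0) (eigSp (g.g.trans s.g) T 0))) ∧
    (∀ (p q : ℚ) (a b : V), a ∈ eigSp (g.g.trans s.g) T 0 → a ∈ A.wtSpace p →
      b ∈ eigSp (g.g.trans s.g) T 0 → b ∈ A.wtSpace q →
      mode0 A (Finsupp.single (p - 1) a) (Finsupp.single (q - 1) b)
        - oLift A (∑ᶠ j : ℕ, ((qchoose (p - 1) j : ℚ) : ℂ) • A.Y a (j : ℤ) b)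
        ∈ DLsub A g T₀) := by
  have hg : g.g ^ T₀ = 1 := hT₀ ▸ pow_orderOf_eq_one g.g
  refine ⟨fun f hf hwt => ⟨f, mem_span_single_of_mem_LVgSet A g s T hs hf hwt, ?_⟩,
    fun a _ => oLift_mem_DLsub_iff A g s T hs hg h0 a, fun p q a b _ ha _ hb => ?_⟩
  · rw [sub_self]
    exact zero_mem _
  · rw [mode0_single_single_eq_oLift A ha hb, sub_self]
    exact zero_mem _

/-- The degree-zero part `V[g]_0` is spanned (mod `D L(V,g)`) by the
elements `o(a) = a(wt a - 1)` for homogeneous `a ∈ V^{0*}`; the kernel of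
`a ↦ o(a)` on `V^{0*}` is `(L(-1)+L(0))V^{0*}`; and the induced bracket is
`[a,b] = Σ_j C(wt a - 1, j) a_j b`. -/
theorem stmt10 (A : VOSA V) (g s : VOSA.Aut A) (hs : A.IsParityAut s)
    (T₀ T : ℕ) (hT₀ : orderOf g.g = T₀) (hT : orderOf (g.g.trans s.g) = T)
    (h0 : 0 < T₀) (h1 : 0 < T) :
    (∀ f ∈ LVgSet A g T₀, (∀ q : ℚ, f q ∈ A.wtSpace (q + 1)) →
      ∃ x ∈ Submodule.span ℂ {y : ℚ →₀ V | ∃ (p : ℚ) (a : V),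
          a ∈ eigSp (g.g.trans s.g) T 0 ∧ a ∈ A.wtSpace p ∧
          y = Finsupp.single (p - 1) a},
        f - x ∈ DLsub A g T₀) ∧
    (∀ a ∈ eigSp (g.g.trans s.g) T 0,
      (oLift A a ∈ DLsub A g T₀ ↔
        a ∈ Submodule.map (A.Lm1 + A.L0) (eigSp (g.g.trans s.g) T 0))) ∧
    (∀ (p q : ℚ) (a b : V), a ∈ eigSp (g.g.trans s.g) T 0 → a ∈ A.wtSpace p →
      b ∈ eigSp (g.g.trans s.g) T 0 → b ∈ A.wtSpace q →
      mode0 A (Finsupp.single (p - 1) a) (Finsupp.single (q - 1) b)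
        - oLift A (∑ᶠ j : ℕ, ((qchoose (p - 1) j : ℚ) : ℂ) • A.Y a (j : ℤ) b)
        ∈ DLsub A g T₀) :=
  stmt10_general A g s hs T₀ T hT₀ h0
end
end
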